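/- arXiv:2303.15828 — 4 statements merged into one kernel-verified Lean document; each statement's English description precedes it below -/
import Mathlib

section
/- Let u₁(r) = (λε/6)(r² − r₀²) + μ on [0, r₀] and u₂(r) = u_∞ + (λ/6)(r² − R²) + ((r−R)r₀)/((r₀−R)r) · (μ − u_∞ − (λ/6)(r₀² − R²)) on [r₀, R]. Then u₁'(r₀) = u₂'(r₀) holds if and only if λ = 3(u_∞ − μ) / ((ε−1)r₀²(R−r₀)/R + (1/2)(R² − r₀²)). -/
open Real Set

lemma hasDerivAt_mul_sq_sub (a c x : ℝ) :
    HasDerivAt (fun r : ℝ => a * (r ^ 2 - c)) (a * (2 * x)) x := by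
  simpa using ((hasDerivAt_pow 2 x).sub_const c).const_mul a

lemma hasDerivAt_sub_mul_div_mul_self {a c k x : ℝ} (hk : k ≠ 0) (hx : x ≠ 0) :
    HasDerivAt (fun r : ℝ => (r - a) * c / (k * r)) (a * c / (k * x ^ 2)) x := by
  have hnum : HasDerivAt (fun r : ℝ => (r - a) * c) c x := by
    simpa using ((hasDerivAt_id x).sub_const a).mul_const c
  have hden : HasDerivAt (fun r : ℝ => k * r) k x := by
    simpa using (hasDerivAt_id x).const_mul k
  refine (hnum.div hden (mul_ne_zero hk hx)).congr_deriv ?_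
  field_simp
  ring

theorem stmt_1_general (R r0 lam eps uinf mu : ℝ) (hr0 : 0 < r0) (hr0R : r0 < R)
    (hden : (eps - 1) * r0 ^ 2 * (R - r0) / R + (1 / 2) * (R ^ 2 - r0 ^ 2) ≠ 0) :
    let u1 : ℝ → ℝ := fun r => lam * eps / 6 * (r ^ 2 - r0 ^ 2) + mu
    let u2 : ℝ → ℝ := fun r =>
      uinf + lam / 6 * (r ^ 2 - R ^ 2) +
        (r - R) * r0 / ((r0 - R) * r) * (mu - uinf - lam / 6 * (r0 ^ 2 - R ^ 2))
    (deriv u1 r0 = deriv u2 r0 ↔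
      lam = 3 * (uinf - mu) /
        ((eps - 1) * r0 ^ 2 * (R - r0) / R + (1 / 2) * (R ^ 2 - r0 ^ 2))) := by
  intro u1 u2
  have hRr0 : r0 - R ≠ 0 := sub_ne_zero.mpr hr0R.ne
  have hR : R ≠ 0 := (hr0.trans hr0R).ne'
  set C := mu - uinf - lam / 6 * (r0 ^ 2 - R ^ 2)
  have hu1 : deriv u1 r0 = lam * eps / 6 * (2 * r0) :=
    ((hasDerivAt_mul_sq_sub _ _ r0).add_const mu).deriv
  have hu2 : deriv u2 r0 = lam / 6 * (2 * r0) + R * r0 / ((r0 - R) * r0 ^ 2) * C :=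
    (((hasDerivAt_mul_sq_sub _ _ r0).const_add uinf).add
      ((hasDerivAt_sub_mul_div_mul_self hRr0 hr0.ne').mul_const C)).deriv
  rw [hu1, hu2, eq_div_iff hden]
  field_simp
  constructor <;> intro h <;> linear_combination (-1 : ℝ) * h

theorem stmt_1 (R r0 lam eps uinf mu : ℝ) (hr0 : 0 < r0) (hr0R : r0 < R)
    (hlam : 0 < lam) (heps : 0 < eps) (heps1 : eps ≠ 1)
    (hmu : 0 < mu) (huinf : mu < uinf)
    (hden : (eps - 1) * r0 ^ 2 * (R - r0) / R + (1 / 2) * (R ^ 2 - r0 ^ 2) ≠ 0) :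
    let u1 : ℝ → ℝ := fun r => lam * eps / 6 * (r ^ 2 - r0 ^ 2) + mu
    let u2 : ℝ → ℝ := fun r =>
      uinf + lam / 6 * (r ^ 2 - R ^ 2) +
        (r - R) * r0 / ((r0 - R) * r) * (mu - uinf - lam / 6 * (r0 ^ 2 - R ^ 2))
    (deriv u1 r0 = deriv u2 r0 ↔
      lam = 3 * (uinf - mu) /
        ((eps - 1) * r0 ^ 2 * (R - r0) / R + (1 / 2) * (R ^ 2 - r0 ^ 2))) :=
  stmt_1_general R r0 lam eps uinf mu hr0 hr0R hden
end

section
/- For ε > 3/2, the function g(r) = 3(u_∞ − μ) / ((ε−1)r²(R−r)/R + (1/2)(R² − r²)) on (0,R) attains a global minimum at r* = (2ε−3)R/(3(ε−1)), with minimum value g(r*) = 27(u_∞ − μ)(ε−1)² / (ε² R² (4ε/3 − 3/2)). -/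
open Real Set

/-! The denominator `D` of `g` is a cubic in `r` whose derivative vanishes at `0` and at `r₀`.
Completing the square around `r₀` gives
`D r₀ - D r = (r - r₀)² (6 (ε - 1) r + (2ε - 3) R) / (6 R)`,
which is nonnegative for `r ≥ 0` once `ε ≥ 3/2`. So `D` is maximal at `r₀` on `(0, R)`, where
it is positive, and `g = 3 (u∞ - μ) / D` with a nonnegative numerator is minimal there. -/

noncomputable def cubicDenom (R eps r : ℝ) : ℝ :=
  (eps - 1) * r ^ 2 * (R - r) / R + (1 / 2) * (R ^ 2 - r ^ 2)

noncomputable def criticalRadius (R eps : ℝ) : ℝ :=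
  (2 * eps - 3) * R / (3 * (eps - 1))

section

variable {R eps : ℝ}

theorem criticalRadius_mem_Ioo (hR : 0 < R) (heps : 3 / 2 < eps) :
    criticalRadius R eps ∈ Ioo 0 R := by
  have hpos : 0 < 3 * (eps - 1) := by linarith
  unfold criticalRadius
  constructor
  · exact div_pos (by nlinarith) hpos
  · rw [div_lt_iff₀ hpos]
    nlinarith

theorem cubicDenom_pos (hR : 0 < R) (heps : 1 ≤ eps) {r : ℝ} (hr : r ∈ Ioo 0 R) :
    0 < cubicDenom R eps r := by
  obtain ⟨hr0, hrR⟩ := hr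
  have hcubic : 0 ≤ (eps - 1) * r ^ 2 * (R - r) / R := by
    have : 0 ≤ eps - 1 := by linarith
    have : 0 ≤ R - r := by linarith
    positivity
  have hquad : 0 < (1 / 2) * (R ^ 2 - r ^ 2) := by nlinarith
  unfold cubicDenom
  linarith

theorem cubicDenom_criticalRadius_sub (hR : R ≠ 0) (heps : eps ≠ 1) (r : ℝ) :
    cubicDenom R eps (criticalRadius R eps) - cubicDenom R eps r =
      (r - criticalRadius R eps) ^ 2 * (6 * (eps - 1) * r + (2 * eps - 3) * R) / (6 * R) := by
  have : eps - 1 ≠ 0 := sub_ne_zero.mpr heps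
  unfold cubicDenom criticalRadius
  field_simp
  ring

theorem cubicDenom_le_cubicDenom_criticalRadius (hR : 0 < R) (heps : 3 / 2 ≤ eps) {r : ℝ}
    (hr : 0 ≤ r) : cubicDenom R eps r ≤ cubicDenom R eps (criticalRadius R eps) := by
  have hdiff := cubicDenom_criticalRadius_sub hR.ne' (by linarith : eps ≠ 1) r
  have hfactor : 0 ≤ 6 * (eps - 1) * r + (2 * eps - 3) * R := by nlinarith
  have : 0 ≤ (r - criticalRadius R eps) ^ 2 * (6 * (eps - 1) * r + (2 * eps - 3) * R) /
      (6 * R) := by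
    positivity
  linarith

theorem cubicDenom_criticalRadius (hR : R ≠ 0) (heps : eps ≠ 1) :
    cubicDenom R eps (criticalRadius R eps) =
      eps ^ 2 * R ^ 2 * (8 * eps - 9) / (54 * (eps - 1) ^ 2) := by
  have : eps - 1 ≠ 0 := sub_ne_zero.mpr heps
  unfold cubicDenom criticalRadius
  field_simp
  ring

end

theorem stmt_2_general (R uinf mu eps : ℝ) (hR : 0 < R) (huinf : mu < uinf)
    (heps : 3 / 2 < eps) :
    let g : ℝ → ℝ := fun r =>
      3 * (uinf - mu) / ((eps - 1) * r ^ 2 * (R - r) / R + (1 / 2) * (R ^ 2 - r ^ 2))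
    let rstar : ℝ := (2 * eps - 3) * R / (3 * (eps - 1))
    rstar ∈ Ioo (0:ℝ) R ∧
    (∀ r ∈ Ioo (0:ℝ) R, g rstar ≤ g r) ∧
    g rstar = 27 * (uinf - mu) * (eps - 1) ^ 2 / (eps ^ 2 * R ^ 2 * (4 * eps / 3 - 3 / 2)) := by
  intro g rstar
  change criticalRadius R eps ∈ Ioo 0 R ∧
    (∀ r ∈ Ioo (0:ℝ) R, 3 * (uinf - mu) / cubicDenom R eps (criticalRadius R eps) ≤
      3 * (uinf - mu) / cubicDenom R eps r) ∧
    3 * (uinf - mu) / cubicDenom R eps (criticalRadius R eps) = _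
  refine ⟨criticalRadius_mem_Ioo hR heps, fun r hr => ?_, ?_⟩
  · exact div_le_div_of_nonneg_left (by linarith) (cubicDenom_pos hR (by linarith) hr)
      (cubicDenom_le_cubicDenom_criticalRadius hR heps.le hr.1.le)
  · rw [cubicDenom_criticalRadius hR.ne' (by linarith)]
    have : 8 * eps - 9 ≠ 0 := by linarith
    have : eps - 1 ≠ 0 := by linarith
    field_simp
    ring

theorem stmt_2 (R uinf mu eps : ℝ) (hR : 0 < R) (hmu : 0 < mu) (huinf : mu < uinf)
    (heps : 3 / 2 < eps) :
    let g : ℝ → ℝ := fun r =>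
      3 * (uinf - mu) / ((eps - 1) * r ^ 2 * (R - r) / R + (1 / 2) * (R ^ 2 - r ^ 2))
    let rstar : ℝ := (2 * eps - 3) * R / (3 * (eps - 1))
    rstar ∈ Ioo (0:ℝ) R ∧
    (∀ r ∈ Ioo (0:ℝ) R, g rstar ≤ g r) ∧
    g rstar = 27 * (uinf - mu) * (eps - 1) ^ 2 / (eps ^ 2 * R ^ 2 * (4 * eps / 3 - 3 / 2)) :=
  stmt_2_general R uinf mu eps hR huinf heps
end

section
/- For 0 < ε ≤ 3/2 with ε ≠ 1, the function g(r) = 3(u_∞ − μ) / ((ε−1)r²(R−r)/R + (1/2)(R² − r²)) is strictly increasing on (0,R), and its infimum as r → 0⁺ equals 6(u_∞ − μ)/R². -/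
/-!
Writing `D` for the denominator, `D(r) = (R - r)(2εr² + (R - r)(R + 2r)) / (2R)` is positive
on `[0, R)` as soon as `ε ≥ 0`, and
`D(a) - D(b) = (b - a)((3 - 2ε)R(a + b) + 2(ε - 1)(a² + ab + b²)) / (2R)`.
The second factor is affine in `ε` and positive at `ε = 0` and `ε = 3/2` (for `0 < a, b < R`),
so `D` is strictly decreasing on `(0, R)` and `g = 3(u∞ - μ)/D` strictly increasing.
The limit is `g(0)`, by continuity, with `D(0) = R²/2`.
-/

open Set Filter Topology

noncomputable def radialDenom (eps R r : ℝ) : ℝ :=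
  (eps - 1) * r ^ 2 * (R - r) / R + (1 / 2) * (R ^ 2 - r ^ 2)

section radialDenom

variable {eps R : ℝ}

lemma radialDenom_eq_factor (hR : R ≠ 0) (r : ℝ) :
    radialDenom eps R r = (R - r) * (2 * eps * r ^ 2 + (R - r) * (R + 2 * r)) / (2 * R) := by
  unfold radialDenom
  field_simp
  ring

lemma radialDenom_sub (hR : R ≠ 0) (a b : ℝ) :
    radialDenom eps R a - radialDenom eps R b =
      (b - a) * ((3 - 2 * eps) * R * (a + b) + 2 * (eps - 1) * (a ^ 2 + a * b + b ^ 2)) /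
        (2 * R) := by
  unfold radialDenom
  field_simp
  ring

lemma radialDenom_zero : radialDenom eps R 0 = R ^ 2 / 2 := by
  simp only [radialDenom]
  ring

lemma radialDenom_pos (heps : 0 ≤ eps) (hR : 0 < R) {r : ℝ} (hr : r ∈ Ico 0 R) :
    0 < radialDenom eps R r := by
  obtain ⟨hr0, hrR⟩ := hr
  rw [radialDenom_eq_factor hR.ne']
  have hRr : 0 < R - r := sub_pos.2 hrR
  have : 0 < (R - r) * (R + 2 * r) := mul_pos hRr (by linarith)
  positivity

lemma radialDenom_strictAntiOn (heps0 : 0 ≤ eps) (heps : eps ≤ 3 / 2) (hR : 0 < R) :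
    StrictAntiOn (radialDenom eps R) (Ioo 0 R) := by
  rintro a ⟨ha0, haR⟩ b ⟨hb0, hbR⟩ hab
  rw [← sub_pos, radialDenom_sub hR.ne']
  have at_zero : 0 < 3 * R * (a + b) - 2 * (a ^ 2 + a * b + b ^ 2) := by
    nlinarith [mul_lt_mul_of_pos_right haR ha0, mul_lt_mul_of_pos_right hbR hb0,
      mul_lt_mul_of_pos_right haR hb0, mul_lt_mul_of_pos_right hbR ha0]
  have at_three_halves : 0 < a ^ 2 + a * b + b ^ 2 := by positivity
  have hfactor :
      0 < (3 - 2 * eps) * R * (a + b) + 2 * (eps - 1) * (a ^ 2 + a * b + b ^ 2) := by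
    nlinarith [mul_nonneg heps0 at_three_halves.le,
      mul_nonneg (by linarith : 0 ≤ 3 - 2 * eps) at_zero.le]
  have hba : 0 < b - a := sub_pos.2 hab
  positivity

end radialDenom

theorem stmt_3_general (R uinf mu eps : ℝ) (hR : 0 < R) (huinf : mu < uinf)
    (heps0 : 0 < eps) (heps : eps ≤ 3 / 2) :
    let g : ℝ → ℝ := fun r =>
      3 * (uinf - mu) / ((eps - 1) * r ^ 2 * (R - r) / R + (1 / 2) * (R ^ 2 - r ^ 2))
    StrictMonoOn g (Ioo (0:ℝ) R) ∧
    Filter.Tendsto g (nhdsWithin 0 (Ioi 0)) (nhds (6 * (uinf - mu) / R ^ 2)) := by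
  change StrictMonoOn (fun r => 3 * (uinf - mu) / radialDenom eps R r) _ ∧
    Tendsto (fun r => 3 * (uinf - mu) / radialDenom eps R r) _ _
  have hC : 0 < 3 * (uinf - mu) := by linarith
  constructor
  · intro a ha b hb hab
    exact div_lt_div_of_pos_left hC (radialDenom_pos heps0.le hR (Ioo_subset_Ico_self hb))
      (radialDenom_strictAntiOn heps0.le heps hR ha hb hab)
  · have hD0 := radialDenom_zero (eps := eps) (R := R)
    have hcont : ContinuousAt (fun r => 3 * (uinf - mu) / radialDenom eps R r) 0 := by
      refine continuousAt_const.div (by unfold radialDenom; fun_prop) ?_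
      rw [hD0]
      positivity
    have hlim : 6 * (uinf - mu) / R ^ 2 = 3 * (uinf - mu) / radialDenom eps R 0 := by
      rw [hD0]
      field_simp
      ring
    exact hlim ▸ hcont.tendsto.mono_left nhdsWithin_le_nhds

theorem stmt_3 (R uinf mu eps : ℝ) (hR : 0 < R) (hmu : 0 < mu) (huinf : mu < uinf)
    (heps0 : 0 < eps) (heps : eps ≤ 3 / 2) (heps1 : eps ≠ 1) :
    let g : ℝ → ℝ := fun r =>
      3 * (uinf - mu) / ((eps - 1) * r ^ 2 * (R - r) / R + (1 / 2) * (R ^ 2 - r ^ 2))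
    StrictMonoOn g (Ioo (0:ℝ) R) ∧
    Filter.Tendsto g (nhdsWithin 0 (Ioi 0)) (nhds (6 * (uinf - mu) / R ^ 2)) :=
  stmt_3_general R uinf mu eps hR huinf heps0 heps
end

section
/- Cardano's depressed cubic (case Δ < 0): let p < 0 and q be real with Δ := q² + (4/27)p³ < 0. Then for each k ∈ {0,1,2}, z_k = 2√(−p/3)·cos((1/3)·arccos((−q/2)·√(27/(−p³))) + 2kπ/3) is a root of z³ + pz + q = 0, and these three roots are distinct. -/
/-!
With `r = √(-p/3)` the substitution `z = 2r cos x` turns `z³ + pz` into `2r³ cos 3x`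
(triple-angle formula), so `z` is a root as soon as `cos 3x = -q / (2r³)`, and the right-hand
side is exactly the argument `c` of `arccos`; the discriminant condition says `c ∈ (-1, 1)`.
With `θ = arccos c` the three choices `x = θ/3 + 2kπ/3` give roots, and since
`θ/3 ∈ (0, π/3)` the angles `θ/3`, `2π/3 - θ/3` (cosine-equivalent to `θ/3 + 4π/3`) and
`θ/3 + 2π/3` increase in `[0, π]`, where cosine is strictly decreasing.
-/

open Real

lemma sqrt_pow_three_mul_sqrt_inv_pow_three {a : ℝ} (ha : 0 < a) :
    √a ^ 3 * √(a ^ 3)⁻¹ = 1 := by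
  have h : √a ^ 3 = √(a ^ 3) := by
    rw [← sqrt_sq (pow_nonneg (sqrt_nonneg a) 3), ← pow_mul, mul_comm, pow_mul, sq_sqrt ha.le]
  rw [h, sqrt_inv, mul_inv_cancel₀ (sqrt_pos.2 (pow_pos ha 3)).ne']

lemma sq_neg_half_mul_sqrt_lt_one {p q : ℝ} (hΔ : q ^ 2 + 4 / 27 * p ^ 3 < 0) :
    ((-q / 2) * √(27 / (-p ^ 3))) ^ 2 < 1 := by
  have hp3 : 0 < -p ^ 3 := by nlinarith
  rw [mul_pow, sq_sqrt (by positivity), div_pow, ← mul_div_assoc, div_lt_one (by positivity)]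
  nlinarith

lemma two_mul_cos_pow_three_sub (r x : ℝ) :
    (2 * r * cos x) ^ 3 - 3 * r ^ 2 * (2 * r * cos x) = 2 * r ^ 3 * cos (3 * x) := by
  rw [cos_three_mul]; ring

lemma depressed_cubic_two_mul_cos_root {p q r θ : ℝ} (hp : p = -3 * r ^ 2)
    (hq : 2 * r ^ 3 * cos θ = -q) (k : ℕ) :
    (2 * r * cos ((1 / 3) * θ + 2 * k * π / 3)) ^ 3
      + p * (2 * r * cos ((1 / 3) * θ + 2 * k * π / 3)) + q = 0 := by
  have h3x : 3 * ((1 / 3) * θ + 2 * k * π / 3) = θ + k * (2 * π) := by ring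
  have := two_mul_cos_pow_three_sub r ((1 / 3) * θ + 2 * k * π / 3)
  rw [h3x, cos_add_nat_mul_two_pi] at this
  rw [hp]; linear_combination this + hq

lemma cos_add_four_pi_div_three (a : ℝ) : cos (a + 4 * π / 3) = cos (2 * π / 3 - a) := by
  rw [← cos_neg, ← cos_add_two_pi]; ring_nf

lemma cos_add_two_pi_div_three_lt_cos_add_four_pi_div_three {a : ℝ} (h₀ : 0 < a)
    (h₁ : a ≤ π / 3) : cos (a + 2 * π / 3) < cos (a + 4 * π / 3) := by
  rw [cos_add_four_pi_div_three]
  exact cos_lt_cos_of_nonneg_of_le_pi (by linarith [pi_pos]) (by linarith) (by linarith)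

lemma cos_add_four_pi_div_three_lt_cos {a : ℝ} (h₀ : 0 ≤ a) (h₁ : a < π / 3) :
    cos (a + 4 * π / 3) < cos a := by
  rw [cos_add_four_pi_div_three]
  exact cos_lt_cos_of_nonneg_of_le_pi h₀ (by linarith [pi_pos]) (by linarith)

theorem stmt_18 (p q : ℝ) (hp : p < 0) (hdelta : q ^ 2 + (4 / 27) * p ^ 3 < 0) :
    let z : ℕ → ℝ := fun k =>
      2 * Real.sqrt (-p / 3) *
        Real.cos ((1 / 3) * Real.arccos ((-q / 2) * Real.sqrt (27 / (-p ^ 3))) +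
          2 * k * Real.pi / 3)
    (∀ k < 3, (z k) ^ 3 + p * z k + q = 0) ∧
    z 0 ≠ z 1 ∧ z 0 ≠ z 2 ∧ z 1 ≠ z 2 := by
  intro z
  have hr : 0 < √(-p / 3) := sqrt_pos.2 (by linarith)
  have hp_eq : p = -3 * √(-p / 3) ^ 2 := by rw [sq_sqrt (by linarith)]; ring
  obtain ⟨hc₁, hc₂⟩ :=
    abs_lt.1 ((sq_lt_one_iff_abs_lt_one _).1 (sq_neg_half_mul_sqrt_lt_one hdelta))
  have hq : 2 * √(-p / 3) ^ 3 * cos (arccos ((-q / 2) * √(27 / (-p ^ 3)))) = -q := by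
    have h := sqrt_pow_three_mul_sqrt_inv_pow_three (a := -p / 3) (by linarith)
    rw [show ((-p / 3) ^ 3)⁻¹ = 27 / (-p ^ 3) by ring] at h
    rw [cos_arccos hc₁.le hc₂.le]
    linear_combination (-q) * h
  set a := (1 / 3) * arccos ((-q / 2) * √(27 / (-p ^ 3)))
  have ha₀ : 0 < a := by have := arccos_pos.2 hc₂; positivity
  have ha₁ : a < π / 3 := by have := arccos_lt_pi.2 hc₁; unfold a; linarith
  have hz : ∀ k : ℕ, z k = 2 * √(-p / 3) * cos (a + 2 * k * π / 3) := fun _ => rfl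
  have hz₀ : z 0 = 2 * √(-p / 3) * cos a := by rw [hz]; congr 2; push_cast; ring
  have hz₁ : z 1 = 2 * √(-p / 3) * cos (a + 2 * π / 3) := by rw [hz]; congr 2; push_cast; ring
  have hz₂ : z 2 = 2 * √(-p / 3) * cos (a + 4 * π / 3) := by rw [hz]; congr 2; push_cast; ring
  refine ⟨fun k _ => depressed_cubic_two_mul_cos_root hp_eq hq k, ?_, ?_, ?_⟩
  · rw [hz₀, hz₁]
    exact (mul_lt_mul_of_pos_left ((cos_add_two_pi_div_three_lt_cos_add_four_pi_div_three ha₀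
      ha₁.le).trans (cos_add_four_pi_div_three_lt_cos ha₀.le ha₁)) (by positivity)).ne'
  · rw [hz₀, hz₂]
    exact (mul_lt_mul_of_pos_left (cos_add_four_pi_div_three_lt_cos ha₀.le ha₁)
      (by positivity)).ne'
  · rw [hz₁, hz₂]
    exact (mul_lt_mul_of_pos_left (cos_add_two_pi_div_three_lt_cos_add_four_pi_div_three ha₀
      ha₁.le) (by positivity)).ne
end
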